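/- arXiv:1612.03645 — 4 statements merged into one kernel-verified Lean document; each statement's English description precedes it below -/
import Mathlib

section
/- Let A ∈ ℝ^{m×n}, C ∈ ℝ^{p×n} with rank(C) = p and rank([A; C]) = n (the (m+p)×n stacked matrix has full column rank). Then the (p+m+n)×(p+m+n) augmented matrix 𝒜 = [[0, 0, C], [0, I_m, A], [Cᵀ, Aᵀ, 0]] is nonsingular. -/
/-!
For a kernel vector `(y, v, z)` the three block rows read `C z = 0`, `v + A z = 0` and
`Cᵀ y + Aᵀ v = 0`. Pairing the last equation with `z` gives `⟪A z, v⟫ = -⟪C z, y⟫ = 0`, and since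
`v = -A z` this is `‖v‖² = 0`. Then `A z = C z = 0` forces `z = 0` because `[A; C]` has full
column rank, and `Cᵀ y = 0` forces `y = 0` because `C` has full row rank.
-/

open Matrix

namespace Matrix

variable {R l m n : Type*} [Fintype n]

theorem mulVec_injective_of_rank_eq_card [Field R] {M : Matrix m n R}
    (h : M.rank = Fintype.card n) : Function.Injective M.mulVec := by
  rw [mulVec_injective_iff, linearIndependent_iff_card_eq_finrank_span, Set.finrank,
    ← rank_eq_finrank_span_cols, h]

variable [Fintype l] [Fintype m] [CommRing R] [LinearOrder R] [IsStrictOrderedRing R]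

theorem eq_zero_of_augmented_system {A : Matrix m n R} {C : Matrix l n R}
    (hAC : Function.Injective (fromRows A C).mulVec) (hC : Function.Injective Cᵀ.mulVec)
    {y : l → R} {v : m → R} {z : n → R} (h₁ : C *ᵥ z = 0) (h₂ : v + A *ᵥ z = 0)
    (h₃ : Cᵀ *ᵥ y + Aᵀ *ᵥ v = 0) : y = 0 ∧ v = 0 ∧ z = 0 := by
  have hv : v = -(A *ᵥ z) := eq_neg_of_add_eq_zero_left h₂
  have hAzv : (A *ᵥ z) ⬝ᵥ v = 0 := by
    have := congrArg (z ⬝ᵥ ·) h₃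
    simpa only [dotProduct_add, dotProduct_mulVec, vecMul_transpose, h₁, zero_dotProduct,
      zero_add, dotProduct_zero] using this
  have hv0 : v = 0 := dotProduct_self_eq_zero.mp <| by
    rw [hv, neg_dotProduct, ← hv, hAzv, neg_zero]
  have hAz : A *ᵥ z = 0 := by simpa [hv0] using h₂
  have hz0 : z = 0 := hAC <| by
    rw [fromRows_mulVec, hAz, h₁, mulVec_zero, Sum.elim_zero_zero]
  refine ⟨hC ?_, hv0, hz0⟩
  simpa [hv0] using h₃

theorem mulVec_injective_augmented [DecidableEq m] (A : Matrix m n R) (C : Matrix l n R)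
    (hAC : Function.Injective (fromRows A C).mulVec) (hC : Function.Injective Cᵀ.mulVec) :
    Function.Injective (fromBlocks 0 (fromCols 0 C) (fromRows 0 Cᵀ)
      (fromBlocks (1 : Matrix m m R) A Aᵀ 0)).mulVec := by
  rw [← coe_mulVecLin, injective_iff_map_eq_zero]
  rintro x hx
  obtain ⟨y, w, rfl⟩ : ∃ y w, x = Sum.elim y w := ⟨_, _, (Sum.elim_comp_inl_inr x).symm⟩
  obtain ⟨v, z, rfl⟩ : ∃ v z, w = Sum.elim v z := ⟨_, _, (Sum.elim_comp_inl_inr w).symm⟩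
  simp only [mulVecLin_apply, fromBlocks_mulVec, fromCols_mulVec, fromRows_mulVec,
    Sum.elim_comp_inl, Sum.elim_comp_inr, zero_mulVec, one_mulVec, zero_add, add_zero,
    ← Sum.elim_add_add, ← Sum.elim_zero_zero, Sum.elim_eq_iff] at hx
  obtain ⟨h₁, h₂, h₃⟩ := hx
  obtain ⟨rfl, rfl, rfl⟩ := eq_zero_of_augmented_system hAC hC h₁ h₂ h₃
  simp only [Sum.elim_zero_zero]

end Matrix

/-- If `rank C = p` and the stacked matrix `[A; C]` has full column rank `n`, then the
augmented matrix `𝒜 = [[0,0,C],[0,I_m,A],[Cᵀ,Aᵀ,0]]` is nonsingular. -/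
theorem stmt9 (m n p : ℕ) (A : Matrix (Fin m) (Fin n) ℝ) (C : Matrix (Fin p) (Fin n) ℝ)
    (hC : C.rank = p) (hAC : (Matrix.fromRows A C).rank = n) :
    IsUnit (Matrix.fromBlocks
      (0 : Matrix (Fin p) (Fin p) ℝ)
      (Matrix.fromCols (0 : Matrix (Fin p) (Fin m) ℝ) C)
      (Matrix.fromRows (0 : Matrix (Fin m) (Fin p) ℝ) Cᵀ)
      (Matrix.fromBlocks (1 : Matrix (Fin m) (Fin m) ℝ) A Aᵀ
        (0 : Matrix (Fin n) (Fin n) ℝ))) := by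
  rw [← mulVec_injective_iff_isUnit]
  refine mulVec_injective_augmented A C (mulVec_injective_of_rank_eq_card ?_)
    (mulVec_injective_of_rank_eq_card ?_)
  · rw [hAC, Fintype.card_fin]
  · rw [rank_transpose, hC, Fintype.card_fin]
end

section
/- Let A ∈ ℝ^{m×n}, C ∈ ℝ^{p×n} satisfy rank(C) = p and rank([A; C]) = n, and let b ∈ ℝ^m, d ∈ ℝ^p. Then the constrained least squares problem min_{x∈ℝⁿ, Cx=d} ‖Ax−b‖₂ has a unique solution, given by x = K b + C_A† d, where P = I_n − C†C, K = (AP)†, and C_A† = (I_n − KA)C†. -/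
/-!
Let `P = I - C†C`, the orthogonal projector onto `ker C`, and `x₀ = K b + C_A† d`. Since
`K = (AP)†` has range inside that of `P`, we get `CK = 0`, and full row rank of `C` gives
`CC† = I`, so `Cx₀ = d`. The residual factors as `Ax₀ - b = (I - AK)(AC†d - b)`, and
`(AP)ᵀ(I - AK) = 0`; as `P` fixes `ker C`, the residual is orthogonal to `A (ker C)`. Pythagoras
then gives `‖Ay - b‖² = ‖A(y - x₀)‖² + ‖Ax₀ - b‖²` for every feasible `y`, so `x₀` is a
minimiser, and any other minimiser `x` has `A(x - x₀) = 0 = C(x - x₀)`, hence `x = x₀` because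
`[A; C]` has full column rank.
-/

open Matrix

/-- `Bd` is the Moore–Penrose pseudoinverse of `B`. -/
def IsMoorePenrose {a b : Type*} [Fintype a] [Fintype b]
    (B : Matrix a b ℝ) (Bd : Matrix b a ℝ) : Prop :=
  B * Bd * B = B ∧ Bd * B * Bd = Bd ∧ (B * Bd)ᵀ = B * Bd ∧ (Bd * B)ᵀ = Bd * B

theorem Matrix.mulVec_injective_of_rank_eq_card_s10 {m n R : Type*} [Fintype n] [Field R]
    {M : Matrix m n R} (h : M.rank = Fintype.card n) : Function.Injective M.mulVec :=
  mulVec_injective_iff.2 <| linearIndependent_iff_card_eq_finrank_span.2 <|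
    h.symm.trans M.rank_eq_finrank_span_cols

theorem Matrix.mulVec_surjective_of_rank_eq_card {m n R : Type*} [Fintype m] [Fintype n]
    [Field R] {M : Matrix m n R} (h : M.rank = Fintype.card m) : Function.Surjective M.mulVec :=
  LinearMap.range_eq_top.1 <| Submodule.eq_top_of_finrank_eq <|
    h.trans (Module.finrank_fintype_fun_eq_card R).symm

theorem Matrix.eq_zero_of_mulVec_eq_zero_of_rank_fromRows {m p n R : Type*} [Fintype n] [Field R]
    {A : Matrix m n R} {C : Matrix p n R} (h : (fromRows A C).rank = Fintype.card n)
    {v : n → R} (hA : A *ᵥ v = 0) (hC : C *ᵥ v = 0) : v = 0 :=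
  mulVec_injective_of_rank_eq_card_s10 h <| by
    rw [fromRows_mulVec, hA, hC, mulVec_zero, Sum.elim_zero_zero]

theorem Matrix.sum_sq_eq_dotProduct_self {n R : Type*} [Fintype n] [CommSemiring R] (v : n → R) :
    ∑ i, v i ^ 2 = v ⬝ᵥ v := by
  simp only [dotProduct, sq]

theorem Matrix.dotProduct_self_add_of_dotProduct_eq_zero {n R : Type*} [Fintype n] [CommSemiring R]
    {v w : n → R} (h : v ⬝ᵥ w = 0) : (v + w) ⬝ᵥ (v + w) = v ⬝ᵥ v + w ⬝ᵥ w := by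
  rw [add_dotProduct, dotProduct_add, dotProduct_add, dotProduct_comm w v, h]
  ring

namespace IsMoorePenrose

variable {a b : Type*} [Fintype a] [Fintype b] {B : Matrix a b ℝ} {Bd : Matrix b a ℝ}

theorem transpose_mul_mul (h : IsMoorePenrose B Bd) : Bᵀ * B * Bd = Bᵀ := by
  obtain ⟨h₁, -, h₃, -⟩ := h
  calc Bᵀ * B * Bd = Bᵀ * (B * Bd)ᵀ := by rw [Matrix.mul_assoc, h₃]
    _ = Bᵀ := by rw [← transpose_mul, h₁]

theorem eq_transpose_mul (h : IsMoorePenrose B Bd) : Bd = Bᵀ * (Bdᵀ * Bd) := by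
  obtain ⟨-, h₂, -, h₄⟩ := h
  calc Bd = (Bd * B)ᵀ * Bd := by rw [h₄, h₂]
    _ = Bᵀ * (Bdᵀ * Bd) := by rw [transpose_mul, Matrix.mul_assoc]

theorem mul_eq_one_of_surjective [DecidableEq a] (h : IsMoorePenrose B Bd)
    (hB : Function.Surjective B.mulVec) : B * Bd = 1 := by
  refine ext_iff_mulVec.2 fun v => ?_
  obtain ⟨u, rfl⟩ := hB v
  rw [one_mulVec, mulVec_mulVec, h.1]

theorem isSymm_one_sub_mul [DecidableEq b] (h : IsMoorePenrose B Bd) : (1 - Bd * B).IsSymm := by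
  rw [IsSymm, transpose_sub, transpose_one, h.2.2.2]

theorem isIdempotentElem_one_sub_mul [DecidableEq b] (h : IsMoorePenrose B Bd) :
    IsIdempotentElem (1 - Bd * B) :=
  IsIdempotentElem.one_sub (by rw [IsIdempotentElem, ← Matrix.mul_assoc, h.2.1])

theorem mul_one_sub_mul [DecidableEq b] (h : IsMoorePenrose B Bd) : B * (1 - Bd * B) = 0 := by
  rw [Matrix.mul_sub, Matrix.mul_one, ← Matrix.mul_assoc, h.1, sub_self]

end IsMoorePenrose

theorem Matrix.one_sub_mul_mulVec_of_mulVec_eq_zero {a b R : Type*} [Fintype a] [Fintype b]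
    [DecidableEq b] [CommRing R] (B : Matrix a b R) (Bd : Matrix b a R) {v : b → R}
    (hv : B *ᵥ v = 0) : (1 - Bd * B) *ᵥ v = v := by
  rw [sub_mulVec, one_mulVec, ← mulVec_mulVec, hv, mulVec_zero, sub_zero]

section ProjectedPseudoinverse

variable {m n : Type*} [Fintype m] [Fintype n] {A : Matrix m n ℝ} {P : Matrix n n ℝ}
  {K : Matrix n m ℝ}

theorem IsMoorePenrose.proj_mul_eq_self (hK : IsMoorePenrose (A * P) K) (hPs : P.IsSymm)
    (hPi : IsIdempotentElem P) : P * K = K := by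
  set X := Aᵀ * (Kᵀ * K)
  have hK' : K = P * X := by
    simpa only [transpose_mul, hPs.eq, Matrix.mul_assoc] using hK.eq_transpose_mul
  rw [hK', ← Matrix.mul_assoc, hPi.eq]

theorem IsMoorePenrose.dotProduct_one_sub_mul_mulVec_eq_zero [DecidableEq m]
    (hK : IsMoorePenrose (A * P) K) (hPs : P.IsSymm) (hPi : IsIdempotentElem P) {v : n → ℝ}
    (hv : P *ᵥ v = v) (r : m → ℝ) :
    (A *ᵥ v) ⬝ᵥ ((1 - A * K) *ᵥ r) = 0 := by
  have hnormal : (A * P)ᵀ * (1 - A * K) = 0 := by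
    rw [Matrix.mul_sub, Matrix.mul_one, ← hK.proj_mul_eq_self hPs hPi, ← Matrix.mul_assoc A,
      ← Matrix.mul_assoc, hK.transpose_mul_mul, sub_self]
  calc (A *ᵥ v) ⬝ᵥ ((1 - A * K) *ᵥ r) = v ⬝ᵥ ((A * P)ᵀ *ᵥ ((1 - A * K) *ᵥ r)) := by
        rw [dotProduct_transpose_mulVec, ← mulVec_mulVec, hv, dotProduct_comm]
    _ = 0 := by rw [mulVec_mulVec, hnormal, zero_mulVec, dotProduct_zero]

end ProjectedPseudoinverse

section ConstrainedLeastSquares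

variable {m n p : Type*} [Fintype m] [Fintype n]

def IsConstrainedLeastSquares (A : Matrix m n ℝ) (C : Matrix p n ℝ) (b : m → ℝ) (d : p → ℝ)
    (x : n → ℝ) : Prop :=
  C *ᵥ x = d ∧ ∀ y, C *ᵥ y = d → ∑ i, ((A *ᵥ x) i - b i) ^ 2 ≤ ∑ i, ((A *ᵥ y) i - b i) ^ 2

variable {A : Matrix m n ℝ} {C : Matrix p n ℝ} {b : m → ℝ} {d : p → ℝ} {x₀ : n → ℝ}

theorem dotProduct_residual_eq_of_orthogonal
    (horth : ∀ v, C *ᵥ v = 0 → (A *ᵥ v) ⬝ᵥ (A *ᵥ x₀ - b) = 0) {y : n → ℝ}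
    (hy : C *ᵥ y = C *ᵥ x₀) :
    (A *ᵥ y - b) ⬝ᵥ (A *ᵥ y - b) =
      (A *ᵥ (y - x₀)) ⬝ᵥ (A *ᵥ (y - x₀)) + (A *ᵥ x₀ - b) ⬝ᵥ (A *ᵥ x₀ - b) := by
  have hsplit : A *ᵥ y - b = A *ᵥ (y - x₀) + (A *ᵥ x₀ - b) := by rw [mulVec_sub]; abel
  have hCv : C *ᵥ (y - x₀) = 0 := by rw [mulVec_sub, hy, sub_self]
  rw [hsplit, dotProduct_self_add_of_dotProduct_eq_zero (horth _ hCv)]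

theorem isConstrainedLeastSquares_iff_eq (hker : ∀ v, A *ᵥ v = 0 → C *ᵥ v = 0 → v = 0)
    (hx₀ : C *ᵥ x₀ = d) (horth : ∀ v, C *ᵥ v = 0 → (A *ᵥ v) ⬝ᵥ (A *ᵥ x₀ - b) = 0)
    (x : n → ℝ) : IsConstrainedLeastSquares A C b d x ↔ x = x₀ := by
  have hobj (y : n → ℝ) : ∑ i, ((A *ᵥ y) i - b i) ^ 2 = (A *ᵥ y - b) ⬝ᵥ (A *ᵥ y - b) :=
    sum_sq_eq_dotProduct_self _
  have hpyth (y : n → ℝ) (hy : C *ᵥ y = d) := dotProduct_residual_eq_of_orthogonal horth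
    (hy.trans hx₀.symm)
  have hnonneg (w : m → ℝ) : 0 ≤ w ⬝ᵥ w := Fintype.sum_nonneg fun i => mul_self_nonneg (w i)
  simp only [IsConstrainedLeastSquares, hobj]
  constructor
  · rintro ⟨hx, hmin⟩
    have hle := hmin x₀ hx₀
    rw [hpyth x hx] at hle
    have hAx : A *ᵥ (x - x₀) = 0 :=
      dotProduct_self_eq_zero.1 (le_antisymm (by linarith) (hnonneg _))
    exact sub_eq_zero.1 (hker _ hAx (by rw [mulVec_sub, hx, hx₀, sub_self]))
  · rintro rfl
    exact ⟨hx₀, fun y hy => by rw [hpyth y hy]; exact le_add_of_nonneg_left (hnonneg _)⟩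

end ConstrainedLeastSquares

/-- Under the rank conditions `rank C = p` and `rank [A; C] = n`, the equality
constrained least squares problem `min_{Cx=d} ‖Ax − b‖₂` has the unique solution
`x = K b + C_A† d`, where `P = I − C†C`, `K = (AP)†`, `C_A† = (I − KA)C†`. -/
theorem stmt10 (m n p : ℕ) (A : Matrix (Fin m) (Fin n) ℝ) (C : Matrix (Fin p) (Fin n) ℝ)
    (b : Fin m → ℝ) (d : Fin p → ℝ)
    (hC : C.rank = p) (hAC : (Matrix.fromRows A C).rank = n)
    (Cdag : Matrix (Fin n) (Fin p) ℝ) (hCdag : IsMoorePenrose C Cdag)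
    (P : Matrix (Fin n) (Fin n) ℝ) (hP : P = 1 - Cdag * C)
    (K : Matrix (Fin n) (Fin m) ℝ) (hK : IsMoorePenrose (A * P) K)
    (CAdag : Matrix (Fin n) (Fin p) ℝ) (hCAdag : CAdag = (1 - K * A) * Cdag) :
    ∀ x : Fin n → ℝ,
      (C.mulVec x = d ∧
        ∀ y : Fin n → ℝ, C.mulVec y = d →
          (∑ i, (A.mulVec x i - b i) ^ 2) ≤ ∑ i, (A.mulVec y i - b i) ^ 2) ↔
      x = K.mulVec b + CAdag.mulVec d := by
  subst hP hCAdag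
  have hPs := hCdag.isSymm_one_sub_mul
  have hPi := hCdag.isIdempotentElem_one_sub_mul
  have hCCdag : C * Cdag = 1 := hCdag.mul_eq_one_of_surjective
    (mulVec_surjective_of_rank_eq_card (hC.trans (Fintype.card_fin p).symm))
  have hCK : C * K = 0 := by
    rw [← hK.proj_mul_eq_self hPs hPi, ← Matrix.mul_assoc, hCdag.mul_one_sub_mul,
      Matrix.zero_mul]
  have hfeas : C *ᵥ (K *ᵥ b + ((1 - K * A) * Cdag) *ᵥ d) = d := by
    rw [mulVec_add, mulVec_mulVec, mulVec_mulVec, hCK, zero_mulVec, zero_add,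
      ← Matrix.mul_assoc, Matrix.mul_sub, Matrix.mul_one, ← Matrix.mul_assoc, hCK,
      Matrix.zero_mul, sub_zero, hCCdag, one_mulVec]
  have hres : A *ᵥ (K *ᵥ b + ((1 - K * A) * Cdag) *ᵥ d) - b =
      (1 - A * K) *ᵥ (A *ᵥ (Cdag *ᵥ d) - b) := by
    simp only [mulVec_add, mulVec_sub, sub_mulVec, one_mulVec, ← mulVec_mulVec]
    abel
  refine isConstrainedLeastSquares_iff_eq
    (fun v => eq_zero_of_mulVec_eq_zero_of_rank_fromRows (hAC.trans (Fintype.card_fin n).symm))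
    hfeas fun v hv => ?_
  rw [hres]
  exact hK.dotProduct_one_sub_mul_mulVec_eq_zero hPs hPi
    (one_sub_mul_mulVec_of_mulVec_eq_zero C Cdag hv) _
end

section
/- Let A ∈ ℝ^{m×n}, C ∈ ℝ^{p×n} satisfy rank(C) = p and rank([A; C]) = n. With P = I_n − C†C, K = (AP)†, C_A† = (I_n − KA)C†, the inverse of the augmented matrix 𝒜 = [[0, 0, C], [0, I_m, A], [Cᵀ, Aᵀ, 0]] is the block matrix [[(AC_A†)ᵀ(AC_A†), −(AC_A†)ᵀ, (C_A†)ᵀ], [−AC_A†, I_m − (AP)K, Kᵀ], [C_A†, K, −((AP)ᵀ(AP))†]]. -/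
/-!
Write `B = AP`. Apart from the two rank conditions, everything is formal algebra with the four
Penrose identities. Since `P` is the orthogonal projector onto `ker C` and `Bᵀ = PBᵀ`, the
pseudoinverse `K = B†` satisfies `PK = K`, so `CK = 0` and `AK = BK`; and `(BᵀB)† = KKᵀ` by
uniqueness of pseudoinverses. Full row rank of `C` gives `CC† = 1`, and full column rank of
`[A; C]` gives `KB = P`, because `[A; C] (P - KB) = 0`. These identities make every block of
`𝒜` times the proposed inverse equal to the corresponding block of the identity; a one-sided
inverse of a square matrix is two-sided.
-/

open Matrix

namespace Matrix

variable {K : Type*} [Field K] {l m n : Type*}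

theorem eq_zero_of_rank_eq_zero [Fintype n] {X : Matrix m n K} (h : X.rank = 0) : X = 0 := by
  rw [rank, Submodule.finrank_eq_zero, LinearMap.range_eq_bot] at h
  classical
  ext i j
  simpa using congrFun (LinearMap.congr_fun h (Pi.single j 1)) i

theorem eq_zero_of_mul_eq_zero_of_rank_eq_card [Finite l] [Fintype m] [Fintype n]
    {B : Matrix l m K} {X : Matrix m n K} (hB : B.rank = Fintype.card m) (h : B * X = 0) : X = 0 :=
  eq_zero_of_rank_eq_zero (by have := rank_add_rank_le_card_of_mul_eq_zero h; omega)

theorem mul_eq_of_rank_fromRows_eq_card {p : Type*} [Fintype l] [Fintype m] [Fintype p]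
    {A : Matrix l m K} {C : Matrix p m K} {P : Matrix m m K} {G : Matrix m l K}
    (hG : A * P * G * (A * P) = A * P) (hPG : P * G = G) (hCP : C * P = 0)
    (hAC : (fromRows A C).rank = Fintype.card m) : G * (A * P) = P := by
  refine (sub_eq_zero.mp (eq_zero_of_mul_eq_zero_of_rank_eq_card hAC ?_)).symm
  have hA : A * (P - G * (A * P)) = 0 := by
    rw [Matrix.mul_sub, ← Matrix.mul_assoc, ← hPG, ← Matrix.mul_assoc A P G, hG, sub_self]
  have hC : C * (P - G * (A * P)) = 0 := by
    rw [Matrix.mul_sub, hCP, ← Matrix.mul_assoc, ← hPG, ← Matrix.mul_assoc C P G, hCP,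
      Matrix.zero_mul, Matrix.zero_mul, sub_zero]
  rw [fromRows_mul, hA, hC, fromRows_zero]

end Matrix

namespace IsMoorePenrose

variable {a b : Type*} [Fintype a] [Fintype b] {B : Matrix a b ℝ} {X Y : Matrix b a ℝ}

theorem transpose (h : IsMoorePenrose B X) : IsMoorePenrose Bᵀ Xᵀ := by
  obtain ⟨h1, h2, h3, h4⟩ := h
  refine ⟨?_, ?_, ?_, ?_⟩
  · rw [← transpose_mul, ← transpose_mul, ← Matrix.mul_assoc, h1]
  · rw [← transpose_mul, ← transpose_mul, ← Matrix.mul_assoc, h2]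
  · rw [← transpose_mul, transpose_transpose, h4]
  · rw [← transpose_mul, transpose_transpose, h3]

theorem mul_eq_mul (hX : IsMoorePenrose B X) (hY : IsMoorePenrose B Y) : B * X = B * Y := by
  obtain ⟨x1, -, x3, -⟩ := hX
  obtain ⟨y1, -, y3, -⟩ := hY
  calc B * X = (B * X)ᵀ := x3.symm
    _ = (B * Y * B * X)ᵀ := by rw [y1]
    _ = (B * X)ᵀ * (B * Y)ᵀ := by simp only [← transpose_mul, Matrix.mul_assoc]
    _ = B * X * B * Y := by rw [x3, y3, Matrix.mul_assoc (B * X)]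
    _ = B * Y := by rw [x1]

theorem unique (hX : IsMoorePenrose B X) (hY : IsMoorePenrose B Y) : X = Y := by
  have hBX := hX.mul_eq_mul hY
  have hXB : X * B = Y * B := by
    simpa using congrArg Matrix.transpose (hX.transpose.mul_eq_mul hY.transpose)
  calc X = X * B * X := hX.2.1.symm
    _ = Y * B * Y := by rw [Matrix.mul_assoc, hBX, ← Matrix.mul_assoc, hXB]
    _ = Y := hY.2.1

theorem mul_eq_self_of_mul_transpose_eq (h : IsMoorePenrose B X) {Q : Matrix b b ℝ}
    (hQ : Q * Bᵀ = Bᵀ) : Q * X = X := by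
  obtain ⟨-, hXBX, -, hXB⟩ := h
  have hX : X = Bᵀ * (Xᵀ * X) := by
    rw [← Matrix.mul_assoc, ← transpose_mul, hXB, hXBX]
  rw [hX, ← Matrix.mul_assoc, hQ]

theorem transpose_mul_self (h : IsMoorePenrose B X) : IsMoorePenrose (Bᵀ * B) (X * Xᵀ) := by
  obtain ⟨h1, h2, h3, h4⟩ := h
  have hXXB : X * Xᵀ * Bᵀ = X := by
    rw [Matrix.mul_assoc, ← transpose_mul, h3, ← Matrix.mul_assoc, h2]
  have hBXX : B * X * Xᵀ = Xᵀ := by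
    rw [← h3, ← transpose_mul, ← Matrix.mul_assoc, h2]
  have hL : Bᵀ * B * (X * Xᵀ) = X * B := by
    rw [Matrix.mul_assoc, ← Matrix.mul_assoc B, hBXX, ← transpose_mul, h4]
  have hR : X * Xᵀ * (Bᵀ * B) = X * B := by
    rw [← Matrix.mul_assoc, hXXB]
  refine ⟨?_, ?_, ?_, ?_⟩
  · rw [Matrix.mul_assoc, hR, Matrix.mul_assoc, ← Matrix.mul_assoc B, h1]
  · rw [hR, Matrix.mul_assoc, ← Matrix.mul_assoc B, hBXX]
  · rw [hL, h4]
  · rw [hR, h4]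

theorem mul_eq_one_of_rank_eq_card [DecidableEq a] (h : IsMoorePenrose B X)
    (hB : B.rank = Fintype.card a) : B * X = 1 := by
  obtain ⟨hBXB, -, hBX, -⟩ := h
  refine sub_eq_zero.mp <|
    eq_zero_of_mul_eq_zero_of_rank_eq_card (B := Bᵀ) (by rwa [rank_transpose]) ?_
  rw [Matrix.mul_sub, Matrix.mul_one, ← hBX, ← transpose_mul, hBXB, sub_self]

theorem mul_one_sub_mul_eq_zero [DecidableEq b] (h : IsMoorePenrose B X) :
    B * (1 - X * B) = 0 := by
  rw [Matrix.mul_sub, Matrix.mul_one, ← Matrix.mul_assoc, h.1, sub_self]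

theorem transpose_one_sub_mul [DecidableEq b] (h : IsMoorePenrose B X) :
    (1 - X * B)ᵀ = 1 - X * B := by
  rw [transpose_sub, transpose_one, h.2.2.2]

theorem one_sub_mul_mul_self [DecidableEq b] (h : IsMoorePenrose B X) :
    (1 - X * B) * (1 - X * B) = 1 - X * B := by
  rw [Matrix.sub_mul, Matrix.one_mul, Matrix.mul_assoc, h.mul_one_sub_mul_eq_zero,
    Matrix.mul_zero, sub_zero]

end IsMoorePenrose

section Augmented

variable {R : Type*} [CommRing R] {p m n : Type*} [Fintype p] [Fintype m] [Fintype n]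
  [DecidableEq p] [DecidableEq m] [DecidableEq n]

theorem augmented_mul_eq_one {A : Matrix m n R} {C : Matrix p n R} {G : Matrix n p R}
    {K : Matrix n m R} {M : Matrix n n R} (hCG : C * G = 1) (hCK : C * K = 0) (hCM : C * M = 0)
    (hAM : A * M = Kᵀ) (hGC : G * C + K * A = 1) (hAK : (A * K)ᵀ = A * K) :
    fromBlocks 0 (fromCols 0 C) (fromRows 0 Cᵀ) (fromBlocks 1 A Aᵀ 0) *
      fromBlocks ((A * G)ᵀ * (A * G)) (fromCols (-(A * G)ᵀ) Gᵀ) (fromRows (-(A * G)) G)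
        (fromBlocks (1 - A * K) Kᵀ K (-M)) = 1 := by
  have hAGC : A * G * C = (1 - A * K) * A := by
    rw [Matrix.mul_assoc, eq_sub_of_add_eq hGC, Matrix.mul_sub, Matrix.sub_mul, Matrix.mul_one,
      Matrix.one_mul, Matrix.mul_assoc]
  have hCAG : Cᵀ * (A * G)ᵀ = Aᵀ * (1 - A * K) := by
    rw [← transpose_mul, hAGC, transpose_mul, transpose_sub, hAK, transpose_one]
  have hCAGAG : Cᵀ * ((A * G)ᵀ * (A * G)) = Aᵀ * (A * G) := by
    rw [← Matrix.mul_assoc, hCAG, Matrix.mul_assoc, ← Matrix.mul_assoc _ A, ← hAGC,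
      Matrix.mul_assoc, hCG, Matrix.mul_one]
  have hGCt : Cᵀ * Gᵀ + Aᵀ * Kᵀ = 1 := by
    rw [← transpose_mul, ← transpose_mul, ← transpose_add, hGC, transpose_one]
  have hrows (X : Matrix n p R) : fromRows (0 : Matrix m p R) X + fromRows 0 (-X) = 0 := by
    ext (i | i) j <;> simp
  rw [fromBlocks_multiply, ← fromBlocks_one]
  simp [fromCols_mul_fromRows, fromCols_mul_fromBlocks, fromBlocks_mul_fromRows,
    fromBlocks_multiply, fromRows_mul, fromBlocks_add, hCG, hCK, hCM, hAM, hCAGAG, hCAG, hGCt,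
    hrows, -transpose_mul]

end Augmented

/-- Under the rank conditions, the inverse of the augmented matrix
`𝒜 = [[0,0,C],[0,I_m,A],[Cᵀ,Aᵀ,0]]` is
`[[(AC_A†)ᵀ(AC_A†), −(AC_A†)ᵀ, (C_A†)ᵀ], [−AC_A†, I − (AP)K, Kᵀ], [C_A†, K, −((AP)ᵀ(AP))†]]`,
where `P = I − C†C`, `K = (AP)†`, `C_A† = (I − KA)C†`. -/
theorem stmt11 (m n p : ℕ) (A : Matrix (Fin m) (Fin n) ℝ) (C : Matrix (Fin p) (Fin n) ℝ)
    (hC : C.rank = p) (hAC : (Matrix.fromRows A C).rank = n)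
    (Cdag : Matrix (Fin n) (Fin p) ℝ) (hCdag : IsMoorePenrose C Cdag)
    (P : Matrix (Fin n) (Fin n) ℝ) (hP : P = 1 - Cdag * C)
    (K : Matrix (Fin n) (Fin m) ℝ) (hK : IsMoorePenrose (A * P) K)
    (CAdag : Matrix (Fin n) (Fin p) ℝ) (hCAdag : CAdag = (1 - K * A) * Cdag)
    (M : Matrix (Fin n) (Fin n) ℝ) (hM : IsMoorePenrose ((A * P)ᵀ * (A * P)) M) :
    (Matrix.fromBlocks
        (0 : Matrix (Fin p) (Fin p) ℝ)
        (Matrix.fromCols (0 : Matrix (Fin p) (Fin m) ℝ) C)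
        (Matrix.fromRows (0 : Matrix (Fin m) (Fin p) ℝ) Cᵀ)
        (Matrix.fromBlocks (1 : Matrix (Fin m) (Fin m) ℝ) A Aᵀ 0)) *
      (Matrix.fromBlocks
        ((A * CAdag)ᵀ * (A * CAdag))
        (Matrix.fromCols (-(A * CAdag)ᵀ) CAdagᵀ)
        (Matrix.fromRows (-(A * CAdag)) CAdag)
        (Matrix.fromBlocks (1 - (A * P) * K) Kᵀ K (-M))) = 1 ∧
    (Matrix.fromBlocks
        ((A * CAdag)ᵀ * (A * CAdag))
        (Matrix.fromCols (-(A * CAdag)ᵀ) CAdagᵀ)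
        (Matrix.fromRows (-(A * CAdag)) CAdag)
        (Matrix.fromBlocks (1 - (A * P) * K) Kᵀ K (-M))) *
      (Matrix.fromBlocks
        (0 : Matrix (Fin p) (Fin p) ℝ)
        (Matrix.fromCols (0 : Matrix (Fin p) (Fin m) ℝ) C)
        (Matrix.fromRows (0 : Matrix (Fin m) (Fin p) ℝ) Cᵀ)
        (Matrix.fromBlocks (1 : Matrix (Fin m) (Fin m) ℝ) A Aᵀ 0)) = 1 := by
  subst hP hCAdag
  obtain rfl : M = K * Kᵀ := hM.unique hK.transpose_mul_self
  have hCP := hCdag.mul_one_sub_mul_eq_zero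
  have hPK : (1 - Cdag * C) * K = K := hK.mul_eq_self_of_mul_transpose_eq <| by
    rw [transpose_mul, hCdag.transpose_one_sub_mul, ← Matrix.mul_assoc,
      hCdag.one_sub_mul_mul_self]
  obtain ⟨hBKB, hKBK, hBK, -⟩ := id hK
  have hKB := mul_eq_of_rank_fromRows_eq_card hBKB hPK hCP (by rwa [Fintype.card_fin])
  have hAPK : A * (1 - Cdag * C) * K = A * K := by rw [Matrix.mul_assoc, hPK]
  have hCK : C * K = 0 := by rw [← hPK, ← Matrix.mul_assoc, hCP, Matrix.zero_mul]
  have hCG : C * ((1 - K * A) * Cdag) = 1 := by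
    rw [← Matrix.mul_assoc, Matrix.mul_sub, Matrix.mul_one, ← Matrix.mul_assoc, hCK,
      Matrix.zero_mul, sub_zero, hCdag.mul_eq_one_of_rank_eq_card (by rwa [Fintype.card_fin])]
  have hCM : C * (K * Kᵀ) = 0 := by rw [← Matrix.mul_assoc, hCK, Matrix.zero_mul]
  have hAM : A * (K * Kᵀ) = Kᵀ := by
    rw [← Matrix.mul_assoc, ← hAPK, ← hBK, ← transpose_mul, ← Matrix.mul_assoc, hKBK]
  have hGC : (1 - K * A) * Cdag * C + K * A = 1 := calc
    _ = Cdag * C + K * (A * (1 - Cdag * C)) := by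
      simp only [Matrix.mul_sub, Matrix.sub_mul, Matrix.mul_one, Matrix.one_mul, Matrix.mul_assoc]
      abel
    _ = 1 := by rw [hKB]; abel
  have hAK : (A * K)ᵀ = A * K := by rw [← hAPK]; exact hBK
  have h := augmented_mul_eq_one hCG hCK hCM hAM hGC hAK
  rw [hAPK]
  exact ⟨h, mul_eq_one_comm.mp h⟩
end

section
/- Let A ∈ ℝ^{m×n} and C ∈ ℝ^{p×n} with m + p ≥ n ≥ p, rank(C) = p, and rank([A;C]) = n. Suppose U ∈ ℝ^{m×m} and Q ∈ ℝ^{n×n} are orthogonal with UᵀAQ = [[L₁₁, 0],[L₂₁, L₂₂]] (blocks of row sizes m−n+p, n−p and column sizes p, n−p) and CQ = [S, 0] with S ∈ ℝ^{p×p} and L₂₂ ∈ ℝ^{(n−p)×(n−p)} lower triangular. Then S and L₂₂ are nonsingular. -/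
open Matrix

lemma aux_rank_inj {m : Type*} [Fintype m] {b : ℕ} (M : Matrix m (Fin b) ℝ)
    (h : M.rank = b) : Function.Injective M.mulVec := by
  have hrn := LinearMap.finrank_range_add_finrank_ker M.mulVecLin
  rw [Module.finrank_pi, Fintype.card_fin] at hrn
  rw [Matrix.rank] at h
  have hker : Module.finrank ℝ (LinearMap.ker M.mulVecLin) = 0 := by omega
  have : LinearMap.ker M.mulVecLin = ⊥ := Submodule.finrank_eq_zero.mp hker
  have := LinearMap.ker_eq_bot.mp this
  exact this

/-- Generalized QR factorization of the pair `(A, C)`: with `m = t + k` and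
`n = p + k` (so `m + p ≥ n ≥ p`), orthogonal `U`, `Q`,
`Uᵀ A Q = [[L₁₁, 0], [L₂₁, L₂₂]]`, `C Q = [S, 0]` with `S`, `L₂₂` lower
triangular, under the rank conditions `rank C = p` and `rank [A; C] = n`:
`S` and `L₂₂` are nonsingular. -/
theorem stmt19 (t k p : ℕ)
    (A : Matrix (Fin (t + k)) (Fin (p + k)) ℝ) (C : Matrix (Fin p) (Fin (p + k)) ℝ)
    (hC : C.rank = p) (hAC : (Matrix.fromRows A C).rank = p + k)
    (U : Matrix (Fin (t + k)) (Fin (t + k)) ℝ) (hU : Uᵀ * U = 1 ∧ U * Uᵀ = 1)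
    (Q : Matrix (Fin (p + k)) (Fin (p + k)) ℝ) (hQ : Qᵀ * Q = 1 ∧ Q * Qᵀ = 1)
    (L11 : Matrix (Fin t) (Fin p) ℝ) (L21 : Matrix (Fin k) (Fin p) ℝ)
    (L22 : Matrix (Fin k) (Fin k) ℝ) (S : Matrix (Fin p) (Fin p) ℝ)
    (hL22tri : ∀ i j : Fin k, i < j → L22 i j = 0)
    (hStri : ∀ i j : Fin p, i < j → S i j = 0)
    (hA : Uᵀ * A * Q =
      (Matrix.fromBlocks L11 0 L21 L22).submatrix finSumFinEquiv.symm finSumFinEquiv.symm)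
    (hCQ : C * Q = (Matrix.fromCols S 0).submatrix id finSumFinEquiv.symm) :
    IsUnit S ∧ IsUnit L22 := by
  have hQu : IsUnit Q := ⟨⟨Q, Qᵀ, hQ.2, hQ.1⟩, rfl⟩
  have hACinj : Function.Injective (Matrix.fromRows A C).mulVec :=
    aux_rank_inj _ (by simpa using hAC)
  have hCtinj : Function.Injective (Cᵀ).mulVec := by
    refine aux_rank_inj _ ?_
    rw [Matrix.rank_transpose, hC]
  -- S is a unit
  have hS : IsUnit S := by
    rw [← Matrix.vecMul_injective_iff_isUnit]
    intro v w hvw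
    have key : ∀ u : Fin p → ℝ, u ᵥ* S = 0 → u = 0 := by
      intro u hu
      have h1 : u ᵥ* (C * Q) = 0 := by
        rw [hCQ]
        funext j
        have : (u ᵥ* (Matrix.fromCols S 0).submatrix id finSumFinEquiv.symm) j
            = (u ᵥ* Matrix.fromCols S 0) (finSumFinEquiv.symm j) := rfl
        rw [this, vecMul_fromCols, hu]
        cases finSumFinEquiv.symm j <;> simp
      have h2 : (u ᵥ* C) ᵥ* Q = 0 := by rwa [Matrix.vecMul_vecMul]
      have h3 : u ᵥ* C = 0 := by
        have hQvinj : Function.Injective (fun x => x ᵥ* Q) :=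
          Matrix.vecMul_injective_iff_isUnit.mpr hQu
        have := hQvinj (a₁ := u ᵥ* C) (a₂ := 0) (by simpa [Matrix.zero_vecMul] using h2)
        exact this
      have h4 : Cᵀ *ᵥ u = 0 := by rwa [Matrix.mulVec_transpose]
      have := hCtinj (a₁ := u) (a₂ := 0) (by simpa [Matrix.mulVec_zero] using h4)
      exact this
    have hvw' : v ᵥ* S = w ᵥ* S := hvw
    have hsub : (v - w) ᵥ* S = 0 := by
      rw [Matrix.sub_vecMul, hvw', sub_self]
    have := key _ hsub
    exact sub_eq_zero.mp this
  refine ⟨hS, ?_⟩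
  -- L22 is a unit
  rw [← Matrix.mulVec_injective_iff_isUnit]
  intro v w hvw
  have key : ∀ u : Fin k → ℝ, L22 *ᵥ u = 0 → u = 0 := by
    intro u hu
    set y : Fin (p + k) → ℝ := (Sum.elim 0 u) ∘ finSumFinEquiv.symm with hy
    have hUAQ : (Uᵀ * A * Q) *ᵥ y = 0 := by
      rw [hA, hy, Matrix.submatrix_mulVec_equiv]
      have hcomp : (Sum.elim (0 : Fin p → ℝ) u ∘ finSumFinEquiv.symm) ∘
          (finSumFinEquiv.symm).symm = Sum.elim (0 : Fin p → ℝ) u := by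
        funext x; simp
      rw [hcomp, Matrix.fromBlocks_mulVec]
      funext x
      rcases x with i | i <;>
        simp [Matrix.mulVec_zero, hu]
    have hAQy : (A * Q) *ᵥ y = 0 := by
      have : A * Q = U * (Uᵀ * A * Q) := by
        rw [← Matrix.mul_assoc, ← Matrix.mul_assoc, hU.2, Matrix.one_mul]
      rw [this, ← Matrix.mulVec_mulVec, hUAQ, Matrix.mulVec_zero]
    have hCQy : (C * Q) *ᵥ y = 0 := by
      rw [hCQ, hy]
      have : (Matrix.fromCols S 0).submatrix id finSumFinEquiv.symm *ᵥ
          (Sum.elim 0 u ∘ finSumFinEquiv.symm)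
          = ((Matrix.fromCols S 0) *ᵥ ((Sum.elim 0 u ∘ finSumFinEquiv.symm) ∘
            (finSumFinEquiv.symm).symm)) ∘ id :=
        Matrix.submatrix_mulVec_equiv _ _ _ _
      rw [this]
      have hcomp : (Sum.elim (0 : Fin p → ℝ) u ∘ finSumFinEquiv.symm) ∘
          (finSumFinEquiv.symm).symm = Sum.elim (0 : Fin p → ℝ) u := by
        funext x; simp
      rw [hcomp]
      funext j
      simp [Matrix.fromCols_mulVec_sumElim, Matrix.mulVec_zero]
    have hfr : (Matrix.fromRows A C) *ᵥ (Q *ᵥ y) = 0 := by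
      rw [Matrix.fromRows_mulVec, Matrix.mulVec_mulVec, Matrix.mulVec_mulVec, hAQy, hCQy]
      funext x; rcases x with i | i <;> rfl
    have hQy : Q *ᵥ y = 0 :=
      hACinj (a₁ := Q *ᵥ y) (a₂ := 0) (by simpa [Matrix.mulVec_zero] using hfr)
    have hy0 : y = 0 := by
      have hQinj : Function.Injective Q.mulVec := Matrix.mulVec_injective_iff_isUnit.mpr hQu
      exact hQinj (a₁ := y) (a₂ := 0) (by simpa [Matrix.mulVec_zero] using hQy)
    funext i
    have := congrFun hy0 (finSumFinEquiv (Sum.inr i))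
    simpa [hy] using this
  have hvw' : L22 *ᵥ v = L22 *ᵥ w := hvw
  have hsub : L22 *ᵥ (v - w) = 0 := by
    rw [Matrix.mulVec_sub, hvw', sub_self]
  exact sub_eq_zero.mp (key _ hsub)
end
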